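/- Let $p$ be an odd prime and $A \subseteq \mathbb{F}_p$ with $|A| > p^{2/3}$. Then there exists $u \in A\times A$ such that $|\Delta_u(A\times A)| \geq c\,p$ for some absolute constant $c>0$; in particular $A\times A$ determines a positive proportion of all possible distances. -/

import Mathlib

open Finset

def dist2 {R : Type*} [CommRing R] (u v : R × R) : R :=
  (u.1 - v.1) ^ 2 + (u.2 - v.2) ^ 2

def pinnedDist {R : Type*} [CommRing R] [DecidableEq R] (u : R × R) (E : Finset (R × R)) :
    Finset R :=
  E.image (fun v => dist2 u v)

/-!
Write `E = A × A` and let the pinned energy `e(u)` count the pairs `(v, w) ∈ E²` with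
`‖u - v‖ = ‖u - w‖`. Cauchy–Schwarz over the distance fibres gives `|E|² ≤ |Δ_u(E)| e(u)` and
`|E|² ≤ p e(u)`. For pins `(a, b)` on a horizontal line, equidistance from `v` and `w` is the linear
equation `2 (w.1 - v.1) a = const`; it has at most one solution unless `v` and `w` lie on a common
vertical line and are equal or mirror images in `y = b`. Summing over all pins of `𝔽_p × A` gives
`∑ e(u) ≤ |A|⁵ + 2p|A|³`. Every pin has `p e(u) ≥ |A|⁴`, so averaging over the pins in `A × A`
yields one with `p e(u) ≤ |A|⁴ + 2p²|A| < 3|A|⁴` once `|A|³ > p²`, and then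
`|Δ_u(E)| ≥ |A|⁴ / e(u) > p / 3`.
-/

theorem sum_sq_card_fiberwise_eq_card_filter {α β : Type*} [DecidableEq β] {s : Finset α}
    {t : Finset β} {f : α → β} (hf : Set.MapsTo f s t) :
    ∑ b ∈ t, #{a ∈ s | f a = b} ^ 2 = #{x ∈ s ×ˢ s | f x.1 = f x.2} := by
  have hf₂ : Set.MapsTo (fun x : α × α => f x.1) ↑{x ∈ s ×ˢ s | f x.1 = f x.2} t :=
    fun x hx => hf (mem_product.1 (mem_filter.1 hx).1).1
  rw [card_eq_sum_card_fiberwise hf₂]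
  refine sum_congr rfl fun b _ => ?_
  rw [sq, ← card_product]
  congr 1
  ext ⟨a, a'⟩
  simp only [mem_filter, mem_product]
  grind

theorem card_sq_le_card_mul_card_filter_eq {α β : Type*} [DecidableEq β] {s : Finset α}
    {t : Finset β} {f : α → β} (hf : Set.MapsTo f s t) :
    #s ^ 2 ≤ #t * #{x ∈ s ×ˢ s | f x.1 = f x.2} :=
  calc #s ^ 2 = (∑ b ∈ t, #{a ∈ s | f a = b}) ^ 2 := by rw [card_eq_sum_card_fiberwise hf]
    _ ≤ #t * ∑ b ∈ t, #{a ∈ s | f a = b} ^ 2 := sq_sum_le_card_mul_sum_sq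
    _ = #t * #{x ∈ s ×ˢ s | f x.1 = f x.2} := by rw [sum_sq_card_fiberwise_eq_card_filter hf]

section PinnedEnergy

variable {R : Type*} [CommRing R] [DecidableEq R]

def pinnedEnergy (u : R × R) (E : Finset (R × R)) : ℕ :=
  #{x ∈ E ×ˢ E | dist2 u x.1 = dist2 u x.2}

theorem card_sq_le_card_pinnedDist_mul_pinnedEnergy (u : R × R) (E : Finset (R × R)) :
    #E ^ 2 ≤ #(pinnedDist u E) * pinnedEnergy u E :=
  card_sq_le_card_mul_card_filter_eq fun _ hv => mem_image_of_mem _ hv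

theorem card_sq_le_card_mul_pinnedEnergy [Fintype R] (u : R × R) (E : Finset (R × R)) :
    #E ^ 2 ≤ Fintype.card R * pinnedEnergy u E :=
  card_sq_le_card_mul_card_filter_eq fun _ _ => mem_univ _

end PinnedEnergy

theorem card_filter_mirror_pair_le {R : Type*} [CommRing R] [NoZeroDivisors R] [DecidableEq R]
    (b : R) (E : Finset (R × R)) :
    #{x ∈ E ×ˢ E | x.1.1 = x.2.1 ∧ (b - x.1.2) ^ 2 = (b - x.2.2) ^ 2} ≤ 2 * #E := by
  calc _ ≤ #(E.biUnion fun v => {(v, v), (v, (v.1, 2 * b - v.2))}) := by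
        refine card_le_card fun ⟨v, w⟩ hx => ?_
        obtain ⟨hvw, h1, h2⟩ := by simpa only [mem_filter, mem_product] using hx
        refine mem_biUnion.2 ⟨v, hvw.1, ?_⟩
        simp only [mem_insert, mem_singleton, Prod.mk.injEq, true_and]
        rcases sq_eq_sq_iff_eq_or_eq_neg.1 h2 with h | h
        · exact Or.inl (Prod.ext h1.symm (by linear_combination h))
        · exact Or.inr (Prod.ext h1.symm (by linear_combination -h))
    _ ≤ #E * 2 := card_biUnion_le_card_mul _ _ _ fun _ _ => card_le_two
    _ = 2 * #E := mul_comm _ _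

section FiniteField

variable {F : Type*} [Field F] [Fintype F] [DecidableEq F]

theorem card_filter_dist2_eq_le (h2 : (2 : F) ≠ 0) (b : F) (v w : F × F) :
    #{a : F | dist2 (a, b) v = dist2 (a, b) w}
      ≤ 1 + Fintype.card F * if v.1 = w.1 ∧ (b - v.2) ^ 2 = (b - w.2) ^ 2 then 1 else 0 := by
  obtain ⟨x, y⟩ := v
  obtain ⟨x', y'⟩ := w
  by_cases hx : x = x'
  · subst hx
    split_ifs with h
    · rw [mul_one]
      exact (card_le_univ _).trans (Nat.le_add_left _ _)
    · refine (card_eq_zero.2 <| filter_eq_empty_iff.2 fun a _ ha => ?_).trans_le (Nat.zero_le _)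
      exact h ⟨rfl, by simp only [dist2] at ha; linear_combination ha⟩
  · refine le_add_right (card_le_one_iff.2 ?_)
    intro a a' ha ha'
    rw [mem_filter_univ] at ha ha'
    simp only [dist2] at ha ha'
    have hc : 2 * (x' - x) ≠ 0 := mul_ne_zero h2 (sub_ne_zero.2 (Ne.symm hx))
    exact mul_left_cancel₀ hc (by linear_combination ha - ha')

theorem sum_pinnedEnergy_le (h2 : (2 : F) ≠ 0) (b : F) (E : Finset (F × F)) :
    ∑ a : F, pinnedEnergy (a, b) E ≤ #E ^ 2 + Fintype.card F * (2 * #E) := by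
  calc ∑ a : F, pinnedEnergy (a, b) E
      = ∑ x ∈ E ×ˢ E, #{a : F | dist2 (a, b) x.1 = dist2 (a, b) x.2} := by
        simp only [pinnedEnergy, card_filter]
        exact sum_comm
    _ ≤ ∑ x ∈ E ×ˢ E, (1 + Fintype.card F *
          if x.1.1 = x.2.1 ∧ (b - x.1.2) ^ 2 = (b - x.2.2) ^ 2 then 1 else 0) :=
        sum_le_sum fun x _ => card_filter_dist2_eq_le h2 b x.1 x.2
    _ = #E ^ 2 + Fintype.card F *
          #{x ∈ E ×ˢ E | x.1.1 = x.2.1 ∧ (b - x.1.2) ^ 2 = (b - x.2.2) ^ 2} := by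
        rw [sum_add_distrib, ← mul_sum, card_filter, sum_const, card_product, smul_eq_mul,
          mul_one, sq]
    _ ≤ #E ^ 2 + Fintype.card F * (2 * #E) := by
        gcongr
        exact card_filter_mirror_pair_le b E

theorem exists_mem_mul_pinnedEnergy_le (h2 : (2 : F) ≠ 0) {A : Finset F} (hA : A.Nonempty) :
    ∃ u ∈ A ×ˢ A, Fintype.card F * pinnedEnergy u (A ×ˢ A)
      ≤ #A ^ 4 + 2 * Fintype.card F ^ 2 * #A := by
  set q := Fintype.card F
  set n := #A
  set E := A ×ˢ A
  have hE : #E = n * n := card_product A A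
  have hsub : E ⊆ univ ×ˢ A := product_subset_product_left (subset_univ A)
  have htotal : ∑ u ∈ univ ×ˢ A, pinnedEnergy u E ≤ n * ((n * n) ^ 2 + q * (2 * (n * n))) := by
    rw [sum_product_right, ← hE, ← smul_eq_mul, ← sum_const]
    exact sum_le_sum fun b _ => sum_pinnedEnergy_le h2 b E
  have hrest : #(univ ×ˢ A \ E) * (n * n) ^ 2 ≤ ∑ u ∈ univ ×ˢ A \ E, q * pinnedEnergy u E := by
    rw [← smul_eq_mul, ← sum_const, ← hE]
    exact sum_le_sum fun u _ => card_sq_le_card_mul_pinnedEnergy u E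
  have hcard : #(univ ×ˢ A \ E) + n * n = q * n := by
    rw [← hE, card_sdiff_add_card_eq_card hsub, card_product, card_univ]
  have hsplit : ∑ u ∈ univ ×ˢ A \ E, q * pinnedEnergy u E + ∑ u ∈ E, q * pinnedEnergy u E
      = q * ∑ u ∈ univ ×ˢ A, pinnedEnergy u E := by
    rw [mul_sum]
    exact sum_sdiff hsub
  refine exists_le_of_sum_le (hA.product hA) ?_
  rw [sum_const, smul_eq_mul, hE]
  nlinarith [congrArg (· * (n * n) ^ 2) hcard, Nat.mul_le_mul_left q htotal]

theorem exists_card_le_three_mul_card_pinnedDist (h2 : (2 : F) ≠ 0) (A : Finset F)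
    (hA : Fintype.card F ^ 2 < #A ^ 3) :
    ∃ u ∈ A ×ˢ A, Fintype.card F ≤ 3 * #(pinnedDist u (A ×ˢ A)) := by
  have hn : 0 < #A := Nat.pos_of_ne_zero fun h => by simp [h] at hA
  obtain ⟨u, hu, he⟩ := exists_mem_mul_pinnedEnergy_le h2 (card_pos.1 hn)
  set q := Fintype.card F
  set n := #A
  refine ⟨u, hu, ?_⟩
  set D := #(pinnedDist u (A ×ˢ A))
  set e := pinnedEnergy u (A ×ˢ A)
  have hcs : n ^ 4 ≤ D * e := by
    simpa [card_product, ← pow_two, ← pow_mul] using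
      card_sq_le_card_pinnedDist_mul_pinnedEnergy u (A ×ˢ A)
  have hq : 2 * q ^ 2 * n ≤ 2 * n ^ 4 := by
    rw [mul_assoc, pow_succ n 3]
    exact Nat.mul_le_mul_left 2 (Nat.mul_le_mul_right n hA.le)
  have key : q * n ^ 4 ≤ 3 * D * n ^ 4 :=
    calc q * n ^ 4 ≤ q * (D * e) := Nat.mul_le_mul_left q hcs
      _ = D * (q * e) := by ring
      _ ≤ D * (3 * n ^ 4) := Nat.mul_le_mul_left D (by omega)
      _ = 3 * D * n ^ 4 := by ring
  exact Nat.le_of_mul_le_mul_right key (by positivity)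

end FiniteField

theorem stmt1 :
    ∃ c : ℝ, 0 < c ∧
      ∀ (p : ℕ), p.Prime → Odd p → ∀ A : Finset (ZMod p),
        (A.card : ℝ) > (p : ℝ) ^ ((2 : ℝ) / 3) →
        ∃ u ∈ A ×ˢ A, ((pinnedDist u (A ×ˢ A)).card : ℝ) ≥ c * (p : ℝ) := by
  refine ⟨1 / 3, by norm_num, fun p hp hodd A hA => ?_⟩
  have : Fact p.Prime := ⟨hp⟩
  have h2 : (2 : ZMod p) ≠ 0 := Ring.two_ne_zero <| by
    rw [ZMod.ringChar_zmod_n]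
    rintro rfl
    exact Nat.not_odd_iff_even.2 even_two hodd
  have hcube : Fintype.card (ZMod p) ^ 2 < #A ^ 3 := by
    rw [ZMod.card]
    have hp₀ : (0 : ℝ) ≤ p := p.cast_nonneg
    have : ((p : ℝ) ^ ((2 : ℝ) / 3)) ^ 3 = (p : ℝ) ^ 2 := by
      rw [← Real.rpow_natCast, ← Real.rpow_mul hp₀]
      norm_num
    exact_mod_cast this ▸ pow_lt_pow_left₀ hA (by positivity) three_ne_zero
  obtain ⟨u, hu, hle⟩ := exists_card_le_three_mul_card_pinnedDist h2 A hcube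
  refine ⟨u, hu, ?_⟩
  rw [ZMod.card] at hle
  have : (p : ℝ) ≤ 3 * #(pinnedDist u (A ×ˢ A)) := by exact_mod_cast hle
  linarith
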